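/- Let Γ be a group and let f : Γ → ℂ be a parallelogram function such that f∘ε₃(a,b,c) = 0 for all a, b, c ∈ Γ. Then f is a quadratic form: the map b(γ,δ) := (f(γδ) − f(γ) − f(δ))/2 is a symmetric bimorphism (i.e. b(γγ′,δ) = b(γ,δ) + b(γ′,δ) and b(γ,δ) = b(δ,γ) for all γ, γ′, δ ∈ Γ) and f(γ) = b(γ,γ) for all γ ∈ Γ. -/

import Mathlib

/-- The linearization of `f : Γ → ℂ` to a linear functional on the group algebra `ℂ[Γ]`. -/
noncomputable def lin {Γ : Type*} [Group Γ] (f : Γ → ℂ) : MonoidAlgebra ℂ Γ →ₗ[ℂ] ℂ :=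
  Finsupp.linearCombination ℂ f ∘ₗ (MonoidAlgebra.coeffLinearEquiv ℂ).toLinearMap

/-- `f∘ε₃(a,b,c) = f̂((a-1)(b-1)(c-1))`. -/
noncomputable def eps3 {Γ : Type*} [Group Γ] (f : Γ → ℂ) (a b c : Γ) : ℂ :=
  lin f ((MonoidAlgebra.of ℂ Γ a - 1) * (MonoidAlgebra.of ℂ Γ b - 1) *
    (MonoidAlgebra.of ℂ Γ c - 1))

lemma lin_of {Γ : Type*} [Group Γ] (f : Γ → ℂ) (a : Γ) :
    lin f (MonoidAlgebra.of ℂ Γ a) = f a := by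
  show Finsupp.linearCombination ℂ f (Finsupp.single a 1) = f a
  rw [Finsupp.linearCombination_single, one_smul]

lemma eps3_eq {Γ : Type*} [Group Γ] (f : Γ → ℂ) (a b c : Γ) :
    eps3 f a b c = f (a * b * c) - f (a * b) - f (a * c) - f (b * c)
      + f a + f b + f c - f 1 := by
  have hexp : (MonoidAlgebra.of ℂ Γ a - 1) * (MonoidAlgebra.of ℂ Γ b - 1) *
      (MonoidAlgebra.of ℂ Γ c - 1) =
      MonoidAlgebra.of ℂ Γ (a * b * c) - MonoidAlgebra.of ℂ Γ (a * b)
        - MonoidAlgebra.of ℂ Γ (a * c) - MonoidAlgebra.of ℂ Γ (b * c)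
        + MonoidAlgebra.of ℂ Γ a + MonoidAlgebra.of ℂ Γ b + MonoidAlgebra.of ℂ Γ c
        - MonoidAlgebra.of ℂ Γ 1 := by
    simp only [map_mul, map_one]
    noncomm_ring
  rw [eps3, hexp]
  simp only [map_sub, map_add, lin_of]

theorem parallelogram_with_eps3_zero_is_quadratic {Γ : Type*} [Group Γ] (f : Γ → ℂ)
    (hf : ∀ x y : Γ, f (x * y) + f (x * y⁻¹) = 2 * f x + 2 * f y)
    (h3 : ∀ a b c : Γ, eps3 f a b c = 0) :
    (∀ γ γ' δ : Γ, (f (γ * γ' * δ) - f (γ * γ') - f δ) / 2 =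
      (f (γ * δ) - f γ - f δ) / 2 + (f (γ' * δ) - f γ' - f δ) / 2) ∧
    (∀ γ δ : Γ, (f (γ * δ) - f γ - f δ) / 2 = (f (δ * γ) - f δ - f γ) / 2) ∧
    (∀ γ : Γ, f γ = (f (γ * γ) - f γ - f γ) / 2) := by
  have key : ∀ a b c : Γ, f (a * b * c) - f (a * b) - f (a * c) - f (b * c)
      + f a + f b + f c - f 1 = 0 := by
    intro a b c; rw [← eps3_eq]; exact h3 a b c
  have f1 : f 1 = 0 := by
    have h := hf 1 1
    simp only [one_mul, inv_one] at h
    linear_combination (-1/2 : ℂ) * h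
  have finv : ∀ x : Γ, f x⁻¹ = f x := by
    intro x
    have h := hf 1 x
    simp only [one_mul, f1] at h
    linear_combination h
  have fconj : ∀ g d : Γ, f (g * d * g⁻¹) = f d := by
    intro g d
    have h := key g d⁻¹ (d * g⁻¹)
    have e1 : g * d⁻¹ * (d * g⁻¹) = 1 := by group
    have e2 : d⁻¹ * (d * g⁻¹) = g⁻¹ := by group
    have e3 : g * (d * g⁻¹) = g * d * g⁻¹ := by group
    rw [e1, e2, e3] at h
    have e4 : f (d * g⁻¹) = f (g * d⁻¹) := by
      rw [← finv (g * d⁻¹)]; congr 1; group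
    linear_combination -h + e4 - finv g + finv d
  have fcomm : ∀ x y : Γ, f (x * y) = f (y * x) := by
    intro x y
    have := fconj y (x * y)
    have e : y * (x * y) * y⁻¹ = y * x := by group
    rw [e] at this
    exact this.symm
  refine ⟨?_, ?_, ?_⟩
  · intro γ γ' δ
    have h := key γ γ' δ
    have e : γ * δ = γ * (γ' * δ) * (γ' * δ)⁻¹ * δ := by group
    -- f (γ * δ) appears via key's term f (a*c) with a=γ, c=δ
    rw [f1] at h
    linear_combination h / 2
  · intro γ δ
    rw [fcomm γ δ]; ring
  · intro γ
    have h := hf γ γ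
    rw [mul_inv_cancel, f1] at h
    linear_combination -h / 2
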